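/- arXiv:math/0606465 — 6 statements merged into one kernel-verified Lean document; each statement's English description precedes it below -/
import Mathlib

section
/- Let p be an odd prime and d a positive integer such that p−1 divides d, and let x ∈ ℚ_p. Then (a^d − 1)·x lies in ℤ_p for every unit a ∈ ℤ_pˣ if and only if p^(1+v_p(d))·x lies in ℤ_p. (Equivalently: the subgroup of (ℤ_pˣ)^d-invariants of ℚ_p/ℤ_p, i.e. the elements killed by multiplication by a^d − 1 for all a ∈ ℤ_pˣ, is exactly the p^(1+v_p(d))-torsion subgroup; this is the identification of (ℚ_p/ℤ_p)^((ℤ_pˣ)^d) in the proof of Lemma 3.1.) -/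
/-!
For a unit `a`, Fermat gives `p ∣ a^(p-1) - 1`, so the lifting-the-exponent lemma (`p` odd) yields
`v_p(a^d - 1) = v_p(a^(p-1) - 1) + v_p(d / (p-1)) ≥ 1 + v_p(d)`, since `p ∤ p - 1`;
for `a = 1 + p` this is an equality. Hence the elements `a^d - 1` generate the ideal
`p^(1 + v_p(d)) ℤ_p`, and `c * x ∈ ℤ_p` holds for every `c` of an ideal as soon as it holds
for a generator.
-/

section LiftingTheExponent

variable {R : Type*} [CommRing R] {p : ℕ} [hp : Fact p.Prime]

theorem natCast_not_dvd_natCast_of_prime (hpR : Prime (p : R)) {m : ℕ} (hm : ¬p ∣ m) :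
    ¬(p : R) ∣ (m : R) := by
  have hcop : IsCoprime (p : R) (m : R) :=
    mod_cast (Nat.isCoprime_iff_coprime.2 (hp.out.coprime_iff_not_dvd.2 hm)).intCast (R := R)
  exact fun h => hpR.not_isUnit (hcop.isUnit_of_dvd' dvd_rfl h)

variable [IsDomain R]

theorem emultiplicity_pow_sub_pow_eq_add_padicValNat (hpR : Prime (p : R)) (hodd : Odd p)
    {x y : R} (hxy : (p : R) ∣ x - y) (hx : ¬(p : R) ∣ x) {n : ℕ} (hn : n ≠ 0) :
    emultiplicity (p : R) (x ^ n - y ^ n) = emultiplicity (p : R) (x - y) + padicValNat p n := by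
  obtain ⟨k, m, hpm, rfl⟩ := Nat.exists_eq_pow_mul_and_not_dvd hn p hp.out.ne_one
  have hm : m ≠ 0 := by rintro rfl; exact hpm (dvd_zero p)
  have hxy' : (p : R) ∣ x ^ p ^ k - y ^ p ^ k := hxy.trans (sub_dvd_pow_sub_pow x y _)
  rw [pow_mul, pow_mul, emultiplicity_pow_sub_pow_of_prime hpR hxy'
      (fun h => hx (hpR.dvd_of_dvd_pow h)) (natCast_not_dvd_natCast_of_prime hpR hpm),
    emultiplicity_pow_prime_pow_sub_pow_prime_pow hpR hodd hxy hx,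
    padicValNat.mul (pow_ne_zero _ hp.out.ne_zero) hm, padicValNat.prime_pow,
    padicValNat.eq_zero_of_not_dvd hpm, add_zero]

end LiftingTheExponent

theorem IsDiscreteValuationRing.associated_pow_of_emultiplicity_eq {R : Type*} [CommRing R]
    [IsDomain R] [IsDiscreteValuationRing R] {ϖ z : R} (hϖ : Irreducible ϖ) {k : ℕ}
    (h : emultiplicity ϖ z = k) : Associated (ϖ ^ k) z := by
  have hz : z ≠ 0 := by rintro rfl; simp at h
  obtain ⟨n, hn⟩ := associated_pow_irreducible hz hϖ
  rw [emultiplicity_eq_of_associated_right hn,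
    emultiplicity_pow_self_of_prime (irreducible_iff_prime.1 hϖ), Nat.cast_inj] at h
  exact h ▸ hn.symm

namespace PadicInt

variable {p : ℕ} [hp : Fact p.Prime]

theorem natCast_dvd_unit_pow_sub_one_sub_one (a : ℤ_[p]ˣ) :
    (p : ℤ_[p]) ∣ (a : ℤ_[p]) ^ (p - 1) - 1 := by
  rw [← Ideal.mem_span_singleton, ← maximalIdeal_eq_span_p, ← ker_toZMod, RingHom.mem_ker,
    map_sub, map_pow, map_one, sub_eq_zero]
  exact ZMod.pow_card_sub_one_eq_one ((a.isUnit.map toZMod).ne_zero)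

theorem pow_dvd_unit_pow_sub_one (hodd : Odd p) (a : ℤ_[p]ˣ) {d : ℕ} (hd : d ≠ 0)
    (hdvd : p - 1 ∣ d) : (p : ℤ_[p]) ^ (1 + padicValNat p d) ∣ (a : ℤ_[p]) ^ d - 1 := by
  obtain ⟨m, rfl⟩ := hdvd
  have hm : m ≠ 0 := right_ne_zero_of_mul hd
  have hp1 : ¬p ∣ p - 1 :=
    Nat.not_dvd_of_pos_of_lt (Nat.sub_pos_of_lt hp.out.one_lt) (Nat.sub_lt hp.out.pos one_pos)
  have hfermat := natCast_dvd_unit_pow_sub_one_sub_one a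
  have hau : ¬(p : ℤ_[p]) ∣ (a : ℤ_[p]) ^ (p - 1) :=
    fun h => prime_p.not_isUnit (isUnit_of_dvd_unit h (a.isUnit.pow _))
  rw [padicValNat.mul (left_ne_zero_of_mul hd) hm, padicValNat.eq_zero_of_not_dvd hp1, zero_add,
    pow_mul]
  apply pow_dvd_of_le_emultiplicity
  have hlte := emultiplicity_pow_sub_pow_eq_add_padicValNat prime_p hodd hfermat hau hm
  rw [one_pow] at hlte
  rw [hlte, Nat.cast_add, Nat.cast_one]
  gcongr
  exact le_emultiplicity_of_pow_dvd (by simpa using hfermat)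

theorem isUnit_one_add_natCast : IsUnit (1 + p : ℤ_[p]) := by
  by_contra h
  rw [not_isUnit_iff, norm_lt_one_iff_dvd, dvd_add_left dvd_rfl] at h
  exact prime_p.not_isUnit (isUnit_of_dvd_one h)

theorem associated_pow_one_add_natCast_pow_sub_one (hodd : Odd p) {d : ℕ} (hd : d ≠ 0) :
    Associated ((p : ℤ_[p]) ^ (1 + padicValNat p d)) ((1 + p : ℤ_[p]) ^ d - 1) := by
  have hpp : (p : ℤ_[p]) ∣ (1 + p : ℤ_[p]) - 1 := by simp
  have hnd : ¬(p : ℤ_[p]) ∣ 1 + p :=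
    fun h => prime_p.not_isUnit (isUnit_of_dvd_unit h isUnit_one_add_natCast)
  have hself : emultiplicity (p : ℤ_[p]) p = 1 := by
    simpa using emultiplicity_pow_self_of_prime (prime_p (p := p)) 1
  have hlte := emultiplicity_pow_sub_pow_eq_add_padicValNat prime_p hodd hpp hnd hd
  rw [one_pow, add_sub_cancel_left, hself] at hlte
  exact IsDiscreteValuationRing.associated_pow_of_emultiplicity_eq irreducible_p
    (by simpa using hlte)

theorem exists_coe_mul_eq_of_dvd {c c' : ℤ_[p]} (h : c ∣ c') {x : ℚ_[p]}
    (hc : ∃ y : ℤ_[p], (c : ℚ_[p]) * x = y) : ∃ y : ℤ_[p], (c' : ℚ_[p]) * x = y := by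
  obtain ⟨e, rfl⟩ := h
  obtain ⟨y, hy⟩ := hc
  exact ⟨e * y, by push_cast; rw [← hy]; ring⟩

end PadicInt

/-- Identification of (ℚ_p/ℤ_p)^((ℤ_pˣ)^d) for p odd with (p−1) ∣ d:
for x ∈ ℚ_p, one has (a^d − 1)·x ∈ ℤ_p for all units a ∈ ℤ_pˣ if and only if
p^(1+v_p(d))·x ∈ ℤ_p. -/
theorem stmt_4 (p : ℕ) (hp : Fact p.Prime) (hodd : Odd p) (d : ℕ) (hd : 0 < d)
    (hdvd : (p - 1) ∣ d) (x : ℚ_[p]) :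
    (∀ a : ℤ_[p]ˣ, ∃ y : ℤ_[p],
      ((((a : ℤ_[p]) ^ d - 1 : ℤ_[p]) : ℚ_[p]) * x = (y : ℚ_[p]))) ↔
    ∃ y : ℤ_[p], (p : ℚ_[p]) ^ (1 + padicValNat p d) * x = (y : ℚ_[p]) := by
  have hpow : (((p : ℤ_[p]) ^ (1 + padicValNat p d) : ℤ_[p]) : ℚ_[p]) =
      (p : ℚ_[p]) ^ (1 + padicValNat p d) := by norm_cast
  rw [← hpow]
  constructor
  · intro h
    exact PadicInt.exists_coe_mul_eq_of_dvd
      (PadicInt.associated_pow_one_add_natCast_pow_sub_one hodd hd.ne').symm.dvd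
      (h PadicInt.isUnit_one_add_natCast.unit)
  · intro h a
    exact PadicInt.exists_coe_mul_eq_of_dvd
      (PadicInt.pow_dvd_unit_pow_sub_one hodd a hd.ne' hdvd) h
end

section
/- Let p be an odd prime and d a positive integer such that p−1 does not divide d, and let x ∈ ℚ_p. Then (a^d − 1)·x lies in ℤ_p for every unit a ∈ ℤ_pˣ if and only if x lies in ℤ_p. (Equivalently: the subgroup of (ℤ_pˣ)^d-invariants of ℚ_p/ℤ_p is trivial in this case; this is the identification of (ℚ_p/ℤ_p)^((ℤ_pˣ)^d) in the proof of Lemma 3.1.) -/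
/-- Identification of (ℚ_p/ℤ_p)^((ℤ_pˣ)^d) for p odd with (p−1) ∤ d:
for x ∈ ℚ_p, one has (a^d − 1)·x ∈ ℤ_p for all units a ∈ ℤ_pˣ if and only if
x ∈ ℤ_p; i.e. the invariants subgroup of ℚ_p/ℤ_p is trivial. -/
theorem stmt_5 (p : ℕ) (hp : Fact p.Prime) (hodd : Odd p) (d : ℕ) (hd : 0 < d)
    (hnd : ¬ (p - 1) ∣ d) (x : ℚ_[p]) :
    (∀ a : ℤ_[p]ˣ, ∃ y : ℤ_[p],
      ((((a : ℤ_[p]) ^ d - 1 : ℤ_[p]) : ℚ_[p]) * x = (y : ℚ_[p]))) ↔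
    ∃ y : ℤ_[p], (y : ℚ_[p]) = x := by
  constructor
  · intro h
    -- generator of (ZMod p)ˣ
    obtain ⟨g, hg⟩ := IsCyclic.exists_generator (α := (ZMod p)ˣ)
    have hord : orderOf g = p - 1 := by
      rw [orderOf_eq_card_of_forall_mem_zpowers hg, Nat.card_eq_fintype_card, ZMod.card_units_eq_totient,
        Nat.totient_prime hp.out]
    have hgd : g ^ d ≠ 1 := by
      intro hgd1
      exact hnd (hord ▸ orderOf_dvd_of_pow_eq_one hgd1)
    -- lift g to a unit of ℤ_p
    set b : ℤ_[p] := (((g : ZMod p).val : ℕ) : ℤ_[p]) with hb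
    have htb : PadicInt.toZMod b = (g : ZMod p) := by
      simp [hb, ZMod.natCast_val, ZMod.cast_id]
    have hbu : IsUnit b := by
      rw [← IsLocalRing.notMem_maximalIdeal, ← PadicInt.ker_toZMod, RingHom.mem_ker, htb]
      exact Units.ne_zero g
    obtain ⟨a, ha⟩ := hbu
    have hkey : IsUnit ((a : ℤ_[p]) ^ d - 1) := by
      rw [← IsLocalRing.notMem_maximalIdeal, ← PadicInt.ker_toZMod, RingHom.mem_ker]
      simp only [map_sub, map_pow, map_one, ha, htb]
      intro hcon
      apply hgd
      ext
      push_cast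
      exact sub_eq_zero.mp hcon
    obtain ⟨u, hu⟩ := hkey
    obtain ⟨y, hy⟩ := h a
    refine ⟨(↑u⁻¹ : ℤ_[p]) * y, ?_⟩
    have h1 : ((↑u⁻¹ : ℤ_[p]) : ℚ_[p]) * (((a : ℤ_[p]) ^ d - 1 : ℤ_[p]) : ℚ_[p]) = 1 := by
      rw [← hu, ← PadicInt.coe_mul, u.inv_mul, PadicInt.coe_one]
    push_cast
    rw [← hy, ← mul_assoc, h1, one_mul]
  · rintro ⟨y, rfl⟩
    intro a
    exact ⟨((a : ℤ_[p]) ^ d - 1) * y, by push_cast; ring⟩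
end

section
/- Let d be a positive even integer and let x ∈ ℚ_2. Then (a^d − 1)·x lies in ℤ_2 for every unit a ∈ ℤ_2ˣ if and only if 2^(2+v_2(d))·x lies in ℤ_2. (Equivalently: the subgroup of (ℤ_2ˣ)^d-invariants of ℚ_2/ℤ_2 is exactly the 2^(2+v_2(d))-torsion subgroup; this is the identification of (ℚ_2/ℤ_2)^((ℤ_2ˣ)^d) in the proof of Lemma 3.1.) -/
namespace Stmt6Aux

open PadicInt

lemma dvd_two_iff (z : ℤ_[2]) : (2 : ℤ_[2]) ∣ z ↔ toZMod z = 0 := by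
  have h2 : ((2 : ℕ) : ℤ_[2]) = (2 : ℤ_[2]) := by norm_cast
  rw [← h2, ← Ideal.mem_span_singleton, ← PadicInt.maximalIdeal_eq_span_p,
    ← PadicInt.ker_toZMod, RingHom.mem_ker]

lemma isUnit_iff_not_dvd (z : ℤ_[2]) : IsUnit z ↔ ¬ (2 : ℤ_[2]) ∣ z := by
  have h2 : ((2 : ℕ) : ℤ_[2]) = (2 : ℤ_[2]) := by norm_cast
  rw [PadicInt.isUnit_iff, ← h2, ← PadicInt.norm_lt_one_iff_dvd]
  constructor
  · intro h; simp [h]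
  · intro h; exact le_antisymm (PadicInt.norm_le_one z) (not_lt.mp h)

lemma toZMod_eq_one {a : ℤ_[2]} (ha : IsUnit a) : toZMod a = 1 := by
  have h : toZMod a ≠ 0 := by
    intro h0
    exact (isUnit_iff_not_dvd a).mp ha ((dvd_two_iff a).mpr h0)
  revert h
  have : toZMod a = 0 ∨ toZMod a = 1 := by
    generalize toZMod a = t; revert t; decide
  rcases this with h | h <;> simp [h]

lemma sq_sub_one {a : ℤ_[2]} (ha : IsUnit a) : (2 : ℤ_[2]) ^ 3 ∣ a ^ 2 - 1 := by
  have h1 : (2 : ℤ_[2]) ∣ a - 1 := by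
    rw [dvd_two_iff, map_sub, toZMod_eq_one ha, map_one, sub_self]
  obtain ⟨s, hs⟩ := h1
  have haeq : a = 2 * s + 1 := by rw [← hs]; ring
  have h2 : (2 : ℤ_[2]) ∣ s * (s + 1) := by
    rw [dvd_two_iff, map_mul, map_add, map_one]
    generalize toZMod s = t; revert t; decide
  obtain ⟨w, hw⟩ := h2
  exact ⟨w, by rw [haeq]; ring_nf; rw [show s * 4 + s ^ 2 * 4 = 4 * (s * (s+1)) by ring, hw]; ring⟩

lemma pow_two_pow {a : ℤ_[2]} (ha : IsUnit a) (n : ℕ) :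
    (2 : ℤ_[2]) ^ (n + 3) ∣ a ^ 2 ^ (n + 1) - 1 := by
  induction n with
  | zero => simpa using sq_sub_one ha
  | succ n ih =>
    obtain ⟨c, hc⟩ := ih
    refine ⟨c * (2 ^ (n + 2) * c + 1), ?_⟩
    have he : a ^ 2 ^ (n + 1) = 2 ^ (n + 3) * c + 1 := by linear_combination hc
    rw [show 2 ^ (n + 2) = 2 ^ (n + 1) * 2 by ring, pow_mul, he]; ring

lemma dvd_pow_sub_one {a : ℤ_[2]} (ha : IsUnit a) {d : ℕ} (hd : 0 < d) (heven : Even d) :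
    (2 : ℤ_[2]) ^ (2 + padicValNat 2 d) ∣ a ^ d - 1 := by
  have hk1 : 1 ≤ padicValNat 2 d := by
    have : (2 : ℕ) ^ 1 ∣ d := by simpa using heven.two_dvd
    rcases (padicValNat_dvd_iff 1 d).mp this with h | h
    · omega
    · exact h
  obtain ⟨n, hn⟩ : ∃ n, padicValNat 2 d = n + 1 := ⟨padicValNat 2 d - 1, by omega⟩
  have hdecomp : 2 ^ (n + 1) * (d / 2 ^ (n + 1)) = d := by
    have := Nat.ordProj_mul_ordCompl_eq_self d 2
    rwa [Nat.factorization_def d Nat.prime_two, hn] at this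
  calc (2 : ℤ_[2]) ^ (2 + padicValNat 2 d) ∣ a ^ 2 ^ (n + 1) - 1 := by
        rw [hn, show 2 + (n + 1) = n + 3 by ring]; exact pow_two_pow ha n
    _ ∣ a ^ d - 1 := by
        conv_rhs => rw [← hdecomp, pow_mul]
        simpa using sub_dvd_pow_sub_pow (a ^ 2 ^ (n + 1)) 1 (d / 2 ^ (n + 1))

lemma isUnit_three : IsUnit (3 : ℤ_[2]) := by
  rw [isUnit_iff_not_dvd, dvd_two_iff]
  have : (3 : ℤ_[2]) = ((3 : ℕ) : ℤ_[2]) := by norm_cast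
  rw [this, map_natCast]
  decide

lemma three_pow (n : ℕ) :
    ∃ u : ℤ_[2], IsUnit u ∧ (3 : ℤ_[2]) ^ 2 ^ (n + 1) - 1 = 2 ^ (n + 3) * u := by
  induction n with
  | zero => exact ⟨1, isUnit_one, by norm_num⟩
  | succ n ih =>
    obtain ⟨u, hu, hequ⟩ := ih
    refine ⟨u * (2 ^ (n + 2) * u + 1), hu.mul ?_, ?_⟩
    · rw [isUnit_iff_not_dvd]
      intro h
      have h2 : (2 : ℤ_[2]) ∣ 2 ^ (n + 2) * u := ⟨2 ^ (n + 1) * u, by ring⟩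
      have h1 : (2 : ℤ_[2]) ∣ 1 := by simpa using dvd_sub h h2
      exact (isUnit_iff_not_dvd 1).mp isUnit_one h1
    · have he : (3 : ℤ_[2]) ^ 2 ^ (n + 1) = 2 ^ (n + 3) * u + 1 := by linear_combination hequ
      rw [show 2 ^ (n + 2) = 2 ^ (n + 1) * 2 by ring, pow_mul, he]; ring

lemma three_pow_d {d : ℕ} (hd : 0 < d) (heven : Even d) :
    ∃ u : ℤ_[2], IsUnit u ∧ (3 : ℤ_[2]) ^ d - 1 = 2 ^ (2 + padicValNat 2 d) * u := by
  have hk1 : 1 ≤ padicValNat 2 d := by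
    have : (2 : ℕ) ^ 1 ∣ d := by simpa using heven.two_dvd
    rcases (padicValNat_dvd_iff 1 d).mp this with h | h
    · omega
    · exact h
  obtain ⟨n, hn⟩ : ∃ n, padicValNat 2 d = n + 1 := ⟨padicValNat 2 d - 1, by omega⟩
  set m := d / 2 ^ (n + 1) with hm
  have hdecomp : 2 ^ (n + 1) * m = d := by
    have := Nat.ordProj_mul_ordCompl_eq_self d 2
    rwa [Nat.factorization_def d Nat.prime_two, hn] at this
  have hmodd : ¬ (2 : ℕ) ∣ m := by
    have := Nat.not_dvd_ordCompl Nat.prime_two (by omega : d ≠ 0)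
    rwa [Nat.factorization_def d Nat.prime_two, hn] at this
  obtain ⟨u, hu, hequ⟩ := three_pow n
  set b : ℤ_[2] := (3 : ℤ_[2]) ^ 2 ^ (n + 1) with hb
  have hgeom : (∑ i ∈ Finset.range m, b ^ i) * (b - 1) = b ^ m - 1 := geom_sum_mul b m
  have hSunit : IsUnit (∑ i ∈ Finset.range m, b ^ i) := by
    rw [isUnit_iff_not_dvd, dvd_two_iff]
    have hb1 : toZMod b = 1 := by
      have : (2 : ℤ_[2]) ∣ b - 1 := ⟨2 ^ (n + 2) * u, by rw [hequ]; ring⟩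
      have h0 := (dvd_two_iff _).mp this
      rw [map_sub, map_one, sub_eq_zero] at h0
      exact h0
    rw [map_sum]
    simp only [map_pow, hb1, one_pow]
    simp only [Finset.sum_const, Finset.card_range, nsmul_eq_mul, mul_one]
    rw [ZMod.natCast_eq_zero_iff]
    exact hmodd
  refine ⟨u * (∑ i ∈ Finset.range m, b ^ i), hu.mul hSunit, ?_⟩
  have : (3 : ℤ_[2]) ^ d = b ^ m := by rw [hb, ← pow_mul, hdecomp]
  rw [this, ← hgeom, hequ, hn]
  ring

end Stmt6Aux

/-- Identification of (ℚ_2/ℤ_2)^((ℤ_2ˣ)^d) for even d > 0: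
for x ∈ ℚ_2, one has (a^d − 1)·x ∈ ℤ_2 for all units a ∈ ℤ_2ˣ if and only if
2^(2+v_2(d))·x ∈ ℤ_2. -/
theorem stmt_6 (d : ℕ) (hd : 0 < d) (heven : Even d) (x : ℚ_[2]) :
    (∀ a : ℤ_[2]ˣ, ∃ y : ℤ_[2],
      ((((a : ℤ_[2]) ^ d - 1 : ℤ_[2]) : ℚ_[2]) * x = (y : ℚ_[2]))) ↔
    ∃ y : ℤ_[2], (2 : ℚ_[2]) ^ (2 + padicValNat 2 d) * x = (y : ℚ_[2]) := by
  constructor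
  · intro h
    obtain ⟨u, hu, hequ⟩ := Stmt6Aux.three_pow_d hd heven
    obtain ⟨y, hy⟩ := h Stmt6Aux.isUnit_three.unit
    rw [Stmt6Aux.isUnit_three.unit_spec] at hy
    refine ⟨(hu.unit⁻¹ : ℤ_[2]ˣ) * y, ?_⟩
    have hui : ((hu.unit⁻¹ : ℤ_[2]ˣ) : ℤ_[2]) * u = 1 := by
      have := hu.unit.inv_mul
      rwa [hu.unit_spec] at this
    have hequ' : ((3 : ℚ_[2])) ^ d - 1 = 2 ^ (2 + padicValNat 2 d) * (u : ℚ_[2]) := by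
      exact_mod_cast congrArg (fun z : ℤ_[2] => (z : ℚ_[2])) hequ
    have hui' : (((hu.unit⁻¹ : ℤ_[2]ˣ) : ℤ_[2]) : ℚ_[2]) * (u : ℚ_[2]) = 1 := by
      exact_mod_cast congrArg (fun z : ℤ_[2] => (z : ℚ_[2])) hui
    have hy' : ((3 : ℚ_[2]) ^ d - 1) * x = (y : ℚ_[2]) := by
      push_cast at hy ⊢
      exact_mod_cast hy
    push_cast
    linear_combination (((hu.unit⁻¹ : ℤ_[2]ˣ) : ℤ_[2]) : ℚ_[2]) * hy' -
      (((hu.unit⁻¹ : ℤ_[2]ˣ) : ℤ_[2]) : ℚ_[2]) * x * hequ' -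
      2 ^ (2 + padicValNat 2 d) * x * hui'
  · rintro ⟨y, hy⟩ a
    obtain ⟨c, hc⟩ := Stmt6Aux.dvd_pow_sub_one a.isUnit hd heven
    refine ⟨c * y, ?_⟩
    have hc' : (((a : ℤ_[2]) : ℚ_[2])) ^ d - 1 = 2 ^ (2 + padicValNat 2 d) * (c : ℚ_[2]) := by
      exact_mod_cast congrArg (fun z : ℤ_[2] => (z : ℚ_[2])) hc
    push_cast
    linear_combination (c : ℚ_[2]) * hy + x * hc'
end

section
/- Let G be a group acting transitively on a finite nonempty set X. If every element g ∈ G fixes at least one element of X (i.e., for every g ∈ G there exists x ∈ X with g·x = x), then X has exactly one element. (This is the group-theoretic fact proved inside Proposition 5.13, underlying the Hasse principle for the k-scheme Spec K for a finite field extension K/k.) -/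
open MulAction

/-- If a group G acts transitively on a finite nonempty set X and every element
of G fixes at least one point of X, then X has exactly one element. -/
theorem stmt_7 {G : Type*} [Group G] {X : Type*} [Fintype X] [Nonempty X]
    [MulAction G X] (htrans : ∀ x y : X, ∃ g : G, g • x = y)
    (hfix : ∀ g : G, ∃ x : X, g • x = x) :
    Fintype.card X = 1 := by
  classical
  set H := (MulAction.toPermHom G X).range with hH
  -- H acts on X
  haveI : Fintype H := Fintype.ofFinite H
  haveI : ∀ h : H, Fintype (fixedBy X (h : Equiv.Perm X)) := fun h => Fintype.ofFinite _
  haveI : Fintype (orbitRel.Quotient H X) := Fintype.ofFinite _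
  have hΩ : Fintype.card (orbitRel.Quotient H X) = 1 := by
    rw [Fintype.card_eq_one_iff]
    obtain ⟨x⟩ := ‹Nonempty X›
    refine ⟨⟦x⟧, ?_⟩
    rintro ⟨y⟩
    apply Quotient.sound
    obtain ⟨g, hg⟩ := htrans x y
    exact ⟨⟨MulAction.toPermHom G X g, ⟨g, rfl⟩⟩, hg⟩
  have hburn := MulAction.sum_card_fixedBy_eq_card_orbits_mul_card_group H X
  rw [hΩ, one_mul] at hburn
  -- each fixedBy is nonempty
  have hpos : ∀ h : H, 1 ≤ Fintype.card (fixedBy X h) := by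
    rintro ⟨h, g, rfl⟩
    obtain ⟨x, hx⟩ := hfix g
    refine Fintype.card_pos_iff.mpr ⟨⟨x, ?_⟩⟩
    show (⟨MulAction.toPermHom G X g, g, rfl⟩ : H) • x = x
    exact hx
  have hone : Fintype.card (fixedBy X ((1 : H))) = Fintype.card X := by
    apply Fintype.card_congr
    apply Equiv.subtypeUnivEquiv
    intro x
    show (1 : H) • x = x
    simp
  -- sum decomposition
  have hmem : (1 : H) ∈ (Finset.univ : Finset H) := Finset.mem_univ _
  rw [← Finset.add_sum_erase _ _ hmem] at hburn
  have hrest : (Finset.univ.erase (1 : H)).card • 1 ≤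
      ∑ h ∈ Finset.univ.erase (1 : H), Fintype.card (fixedBy X h) :=
    Finset.card_nsmul_le_sum _ _ _ (fun h _ => hpos h)
  rw [Finset.card_erase_of_mem hmem, Finset.card_univ, smul_eq_mul, mul_one] at hrest
  have hcard : 1 ≤ Fintype.card H := Fintype.card_pos
  have hX1 : 1 ≤ Fintype.card X := Fintype.card_pos
  omega
end

section
/- None of the rational numbers 13, 17, and 221 = 13·17 is a square in ℚ, but for every prime number p, at least one of 13, 17, 221 is a square in the p-adic field ℚ_p (and all three are squares in ℝ). (This is the verification that the ℚ-scheme Spec ℚ(√13) ⊔ Spec ℚ(√17) ⊔ Spec ℚ(√(13·17)) has points over every completion of ℚ but no ℚ-rational point, the paper's 'typical counterexample' to the Hasse principle for finite schemes.) -/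
/-!
Over ℝ all three numbers are positive. Over ℚ_p: for p = 2, 17 ≡ 1 mod 8 is a square by
Hensel's lemma; for p = 13 and p = 17 the other number is a nonzero square mod p
(17 ≡ 2² mod 13, 13 ≡ 8² mod 17) and lifts; for every other odd p, either 13 or 17 is a
square mod p, or both are non-squares and then their product 221 is a square, since the
non-squares form a single coset of the squares in (ℤ/p)ˣ. Over ℚ none of the three is a square
because none is a square integer.
-/

open Polynomial

namespace PadicInt

variable {p : ℕ} [Fact p.Prime]

theorem norm_lt_one_iff_toZMod_eq_zero (x : ℤ_[p]) : ‖x‖ < 1 ↔ toZMod x = 0 := by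
  rw [← RingHom.mem_ker, ker_toZMod, IsLocalRing.mem_maximalIdeal, mem_nonunits]

theorem norm_eq_one_iff_toZMod_ne_zero (x : ℤ_[p]) : ‖x‖ = 1 ↔ toZMod x ≠ 0 := by
  rw [Ne, ← norm_lt_one_iff_toZMod_eq_zero, not_lt]
  exact ⟨ge_of_eq, (norm_le_one x).antisymm⟩

theorem isSquare_of_norm_sq_sub_lt {u b : ℤ_[p]} (h : ‖b ^ 2 - u‖ < ‖2 * b‖ ^ 2) :
    IsSquare u := by
  obtain ⟨z, hz, -⟩ := hensels_lemma (F := X ^ 2 - C u) (a := b)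
    (by simpa [one_add_one_eq_two] using h)
  simp only [map_sub, map_pow, aeval_X, aeval_C, Algebra.algebraMap_self_apply,
    sub_eq_zero] at hz
  exact ⟨z, by rw [← hz, sq]⟩

theorem isSquare_of_norm_sub_one_lt {u : ℤ_[p]} (h : ‖u - 1‖ < ‖(2 : ℤ_[p])‖ ^ 2) :
    IsSquare u :=
  isSquare_of_norm_sq_sub_lt (b := 1) (by rwa [one_pow, mul_one, norm_sub_rev])

theorem isSquare_of_isSquare_toZMod (hp : p ≠ 2) {u : ℤ_[p]} (hu : toZMod u ≠ 0)
    (h : IsSquare (toZMod u)) : IsSquare u := by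
  obtain ⟨y, hy⟩ := h
  set b : ℤ_[p] := (y.val : ℤ_[p])
  have hb : toZMod b = y := by simp [b]
  have hy0 : y ≠ 0 := by rintro rfl; simp_all
  have h2 : (2 : ZMod p) ≠ 0 := Ring.two_ne_zero (by rwa [ZMod.ringChar_zmod_n])
  apply isSquare_of_norm_sq_sub_lt (b := b)
  rw [(norm_eq_one_iff_toZMod_ne_zero (2 * b)).2 (by
      rw [map_mul, map_ofNat, hb]; exact mul_ne_zero h2 hy0), one_pow,
    norm_lt_one_iff_toZMod_eq_zero]
  simp [hb, hy, sq]

end PadicInt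

namespace Padic

variable {p : ℕ} [Fact p.Prime]

theorem isSquare_natCast_of_isSquare_zmod (hp : p ≠ 2) {n : ℕ} (hn : (n : ZMod p) ≠ 0)
    (h : IsSquare (n : ZMod p)) : IsSquare (n : ℚ_[p]) := by
  rw [← map_natCast PadicInt.toZMod] at hn h
  exact (PadicInt.isSquare_of_isSquare_toZMod hp hn h).map PadicInt.Coe.ringHom

theorem isSquare_seventeen_two : IsSquare (17 : ℚ_[2]) := by
  have h : ‖(17 : ℤ_[2]) - 1‖ < ‖(2 : ℤ_[2])‖ ^ 2 := by
    rw [show (17 : ℤ_[2]) - 1 = ((2 : ℕ) : ℤ_[2]) ^ 4 by norm_num, PadicInt.norm_p_pow,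
      show (2 : ℤ_[2]) = ((2 : ℕ) : ℤ_[2]) by norm_num, PadicInt.norm_p]
    norm_num
  exact (PadicInt.isSquare_of_norm_sub_one_lt h).map PadicInt.Coe.ringHom

end Padic

theorem FiniteField.isSquare_mul_of_not_isSquare {F : Type*} [Field F] [Finite F] {a b : F}
    (ha : ¬IsSquare a) (hb : ¬IsSquare b) : IsSquare (a * b) := by
  classical
  have := Fintype.ofFinite F
  have hab : a * b ≠ 0 :=
    mul_ne_zero (by rintro rfl; exact ha .zero) (by rintro rfl; exact hb .zero)
  rw [← quadraticChar_neg_one_iff_not_isSquare] at ha hb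
  rw [← quadraticChar_one_iff_isSquare hab, map_mul, ha, hb]
  norm_num

theorem ZMod.natCast_ne_zero_of_prime {p q : ℕ} [Fact p.Prime] (hq : q.Prime) (hpq : p ≠ q) :
    (q : ZMod p) ≠ 0 := by
  rw [Ne, ZMod.natCast_eq_zero_iff, Nat.prime_dvd_prime_iff_eq Fact.out hq]
  exact hpq

theorem Rat.not_isSquare_natCast_of_lt_of_lt {m n : ℕ} (hl : m * m < n)
    (hr : n < (m + 1) * (m + 1)) : ¬IsSquare (n : ℚ) := by
  rw [Rat.isSquare_natCast_iff]
  rintro ⟨t, ht⟩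
  exact Nat.not_exists_sq hl hr ⟨t, ht.symm⟩

theorem Padic.isSquare_thirteen_or_seventeen_or_product (p : ℕ) [Fact p.Prime] :
    IsSquare (13 : ℚ_[p]) ∨ IsSquare (17 : ℚ_[p]) ∨ IsSquare (221 : ℚ_[p]) := by
  rcases eq_or_ne p 2 with rfl | h2
  · exact Or.inr (Or.inl Padic.isSquare_seventeen_two)
  have lift (n : ℕ) (hn : (n : ZMod p) ≠ 0) (h : IsSquare (n : ZMod p)) :=
    Padic.isSquare_natCast_of_isSquare_zmod h2 hn h
  rcases eq_or_ne p 13 with rfl | h13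
  · exact Or.inr (Or.inl (by
      simpa using lift 17 (ZMod.natCast_ne_zero_of_prime (by norm_num) (by norm_num)) ⟨2, rfl⟩))
  rcases eq_or_ne p 17 with rfl | h17
  · exact Or.inl (by
      simpa using lift 13 (ZMod.natCast_ne_zero_of_prime (by norm_num) (by norm_num)) ⟨8, rfl⟩)
  have n13 := ZMod.natCast_ne_zero_of_prime (by norm_num) h13
  have n17 := ZMod.natCast_ne_zero_of_prime (by norm_num) h17
  by_cases s13 : IsSquare ((13 : ℕ) : ZMod p)
  · exact Or.inl (by simpa using lift 13 n13 s13)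
  by_cases s17 : IsSquare ((17 : ℕ) : ZMod p)
  · exact Or.inr (Or.inl (by simpa using lift 17 n17 s17))
  have s221 := FiniteField.isSquare_mul_of_not_isSquare s13 s17
  rw [← Nat.cast_mul] at s221
  exact Or.inr (Or.inr (by
    simpa using lift (13 * 17) (by rw [Nat.cast_mul]; exact mul_ne_zero n13 n17) s221))

/-- None of 13, 17, 221 = 13·17 is a square in ℚ, but for every prime p at least
one of them is a square in ℚ_p, and all three are squares in ℝ: the counterexample
to the Hasse principle for the finite ℚ-scheme
Spec ℚ(√13) ⊔ Spec ℚ(√17) ⊔ Spec ℚ(√221). -/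
theorem stmt_11 :
    (¬ IsSquare (13 : ℚ)) ∧ (¬ IsSquare (17 : ℚ)) ∧ (¬ IsSquare (221 : ℚ)) ∧
    (∀ (p : ℕ) [Fact p.Prime],
      IsSquare (13 : ℚ_[p]) ∨ IsSquare (17 : ℚ_[p]) ∨ IsSquare (221 : ℚ_[p])) ∧
    (IsSquare (13 : ℝ) ∧ IsSquare (17 : ℝ) ∧ IsSquare (221 : ℝ)) := by
  have real_sq (x : ℝ) (hx : 0 ≤ x) : IsSquare x := ⟨√x, (Real.mul_self_sqrt hx).symm⟩
  refine ⟨?_, ?_, ?_, Padic.isSquare_thirteen_or_seventeen_or_product,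
    real_sq _ (by norm_num), real_sq _ (by norm_num), real_sq _ (by norm_num)⟩
  · simpa using Rat.not_isSquare_natCast_of_lt_of_lt (m := 3) (n := 13) (by norm_num) (by norm_num)
  · simpa using Rat.not_isSquare_natCast_of_lt_of_lt (m := 4) (n := 17) (by norm_num) (by norm_num)
  · simpa using
      Rat.not_isSquare_natCast_of_lt_of_lt (m := 14) (n := 221) (by norm_num) (by norm_num)
end

section
/- Let β and γ be nonzero rational numbers whose classes in ℚ^×/(ℚ^×)² are independent, i.e., none of β, γ, and βγ is a square in ℚ. Then there exist infinitely many primes p such that neither β nor γ is a square in ℚ_p. (This is the claim, used in the proof of Lemma 5.12, that there is a positive-density set of places inert in both ℚ(√β) and ℚ(√γ).) -/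
/-!
Write `β = b r²` and `γ = c u²` with `b, c` squarefree integers different from `1`. If the Jacobi
symbol `J(b | p)` is `-1`, then `β` is not a square in `ℚ_[p]`: a square root of `b` in `ℚ_[p]` is
integral and reduces to a square root of `b` modulo `p`.

For squarefree `b ≠ 1` some odd `n` has `J(b | n) = -1`: at an odd prime `q ∣ b`, take `n ≡ 1`
modulo `4 |b / q|` and `n` a non-residue modulo `q`, and use quadratic reciprocity; the remaining
cases `b ∈ {-1, 2, -2}` are checked by hand. From such witnesses for `b` and for `c` one gets one
odd `a` with `J(b | a) = J(c | a) = -1`: one of the two witnesses, or their product. Since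
`J(b | ·)` only depends on the residue modulo `4 |b|`, Dirichlet's theorem applied to the primes
`p ≡ a` modulo `4 |b| |c|` finishes the proof.
-/

open scoped NumberTheorySymbols

theorem isSquare_mul_sq_iff {G : Type*} [CommGroupWithZero G] {x r : G} (hr : r ≠ 0) :
    IsSquare (x * r ^ 2) ↔ IsSquare x := by
  refine ⟨fun h => ?_, fun h => h.mul (IsSquare.sq r)⟩
  simpa [hr] using h.div (IsSquare.sq r)

theorem Int.sq_mul_squarefree (n : ℤ) : ∃ a b : ℤ, b ^ 2 * a = n ∧ Squarefree a := by
  obtain ⟨a, b, hab, ha⟩ := Nat.sq_mul_squarefree n.natAbs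
  rcases Int.natAbs_eq n with hn | hn
  · exact ⟨a, b, by rw [hn, ← hab]; push_cast; ring, Int.squarefree_natCast.mpr ha⟩
  · refine ⟨-a, b, by rw [hn, ← hab]; push_cast; ring, ?_⟩
    rwa [← Int.squarefree_natAbs, Int.natAbs_neg, Int.natAbs_natCast]

theorem Rat.exists_squarefree_mul_sq {β : ℚ} (hβ : β ≠ 0) :
    ∃ (b : ℤ) (r : ℚ), Squarefree b ∧ r ≠ 0 ∧ β = b * r ^ 2 := by
  obtain ⟨b, s, hsb, hb⟩ := Int.sq_mul_squarefree (β.num * β.den)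
  have hs : s ≠ 0 := by
    rintro rfl
    simp [Rat.num_ne_zero.mpr hβ, β.den_ne_zero, eq_comm] at hsb
  refine ⟨b, s / β.den, hb, by positivity, ?_⟩
  have hsb' : (s : ℚ) ^ 2 * b = β.num * β.den := by exact_mod_cast hsb
  rw [div_pow, mul_div_assoc', eq_div_iff (by positivity), mul_comm (b : ℚ), hsb']
  nth_rw 1 [← Rat.num_div_den β]
  field_simp

theorem Padic.isSquare_zmod_of_isSquare_intCast {p : ℕ} [Fact p.Prime] {b : ℤ}
    (h : IsSquare (b : ℚ_[p])) : IsSquare (b : ZMod p) := by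
  obtain ⟨y, hy⟩ := h
  have hy1 : ‖y‖ ≤ 1 := by
    have hb : ‖y‖ * ‖y‖ ≤ 1 := by rw [← norm_mul, ← hy]; exact Padic.norm_int_le_one b
    nlinarith [norm_nonneg y]
  let Y : ℤ_[p] := ⟨y, hy1⟩
  have hbY : (b : ℤ_[p]) = Y * Y := PadicInt.ext (by simpa using hy)
  exact ⟨PadicInt.toZMod Y, by simpa using congrArg PadicInt.toZMod hbY⟩

theorem Padic.not_isSquare_of_jacobiSym_eq_neg_one {p : ℕ} [Fact p.Prime] {b : ℤ}
    (h : J(b | p) = -1) {r : ℚ} (hr : r ≠ 0) : ¬ IsSquare ((b * r ^ 2 : ℚ) : ℚ_[p]) := by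
  push_cast
  rw [isSquare_mul_sq_iff (by exact_mod_cast hr)]
  exact fun hsq =>
    ZMod.nonsquare_of_jacobiSym_eq_neg_one h (Padic.isSquare_zmod_of_isSquare_intCast hsq)

theorem jacobiSym_eq_of_modEq (b : ℤ) {m n M : ℕ} (hM : 4 * b.natAbs ∣ M) (hm : Odd m)
    (hn : Odd n) (h : m ≡ n [MOD M]) : J(b | m) = J(b | n) := by
  rw [jacobiSym.mod_right b hm, jacobiSym.mod_right b hn, show m % _ = n % _ from h.of_dvd hM]

theorem coprime_natAbs_of_jacobiSym_eq_neg_one {b : ℤ} {n : ℕ} (h : J(b | n) = -1) :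
    n.Coprime b.natAbs := by
  have hn : n ≠ 0 := by rintro rfl; simp at h
  have hg : b.gcd n = 1 := by
    by_contra hg
    have := jacobiSym.eq_zero_iff.mpr ⟨hn, hg⟩
    simp [h] at this
  simpa [Int.gcd_eq_natAbs, Nat.coprime_comm] using hg
theorem exists_odd_jacobiSym_eq_neg_one_of_prime_dvd {b : ℤ} (hb : Squarefree b) {q : ℕ}
    (hq : q.Prime) (hq2 : Odd q) (hqb : (q : ℤ) ∣ b) : ∃ n, Odd n ∧ J(b | n) = -1 := by
  have : Fact q.Prime := ⟨hq⟩
  obtain ⟨e, rfl⟩ := hqb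
  have he : e ≠ 0 := right_ne_zero_of_mul hb.ne_zero
  have hqe : ¬ q ∣ e.natAbs := by
    rw [← Int.natCast_dvd]
    rintro ⟨f, rfl⟩
    exact hq.not_isUnit (Int.ofNat_isUnit.mp (hb q ⟨f, by ring⟩))
  have hcop : (4 * e.natAbs).Coprime q :=
    Nat.Coprime.mul_left (Nat.Coprime.pow_left 2 (Nat.coprime_two_left.mpr hq2))
      (hq.coprime_iff_not_dvd.mpr hqe).symm
  obtain ⟨x, hx⟩ := FiniteField.exists_nonsquare (F := ZMod q)
    (by rw [ZMod.ringChar_zmod_n]; exact hq2.ne_two_of_dvd_nat dvd_rfl)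
  obtain ⟨n, hne, hnq⟩ := Nat.chineseRemainder hcop 1 x.val
  have hn4 : n % 4 = 1 := by
    have : n % 4 = 1 % 4 := hne.of_dvd (dvd_mul_right 4 _)
    simpa using this
  have hn : Odd n := Nat.odd_iff.mpr (by omega)
  have hJe : J(e | n) = 1 := by
    rw [jacobiSym_eq_of_modEq e dvd_rfl hn odd_one hne, jacobiSym.one_right]
  have hJq : J(q | n) = -1 := by
    rw [jacobiSym.quadratic_reciprocity_one_mod_four' hq2 hn4,
      ZMod.nonsquare_iff_jacobiSym_eq_neg_one, Int.cast_natCast,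
      (ZMod.natCast_eq_natCast_iff _ _ _).mpr hnq, ZMod.natCast_zmod_val]
    exact hx
  exact ⟨n, hn, by rw [jacobiSym.mul_left, hJq, hJe, mul_one]⟩

theorem exists_odd_jacobiSym_eq_neg_one {b : ℤ} (hb : Squarefree b) (hb1 : b ≠ 1) :
    ∃ n, Odd n ∧ J(b | n) = -1 := by
  obtain ⟨k, hk⟩ | ⟨q, hq, hqb, hq2⟩ := Nat.eq_two_pow_or_exists_odd_prime_and_dvd b.natAbs
  · have hb2 : b.natAbs = 1 ∨ b.natAbs = 2 := by
      rcases Nat.eq_zero_or_pos k with rfl | hk0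
      · exact .inl hk
      · have hsf : Squarefree (2 ^ k) := hk ▸ Int.squarefree_natAbs.mpr hb
        rw [Nat.squarefree_pow_iff (by norm_num) hk0.ne'] at hsf
        exact .inr (by rw [hk, hsf.2, pow_one])
    rcases hb2 with h | h <;> rcases Int.natAbs_eq b with hb' | hb' <;> rw [h] at hb' <;>
      subst hb'
    · exact absurd rfl hb1
    · exact ⟨3, by decide, by norm_num⟩
    · exact ⟨3, by decide, by norm_num⟩
    · exact ⟨5, by decide, by norm_num⟩
  · exact exists_odd_jacobiSym_eq_neg_one_of_prime_dvd hb hq hq2 (Int.natCast_dvd.mpr hqb)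

theorem exists_prime_gt_jacobiSym_eq_neg_one {b c : ℤ} (hb : b ≠ 0) (hc : c ≠ 0) {a : ℕ}
    (ha : Odd a) (hab : J(b | a) = -1) (hac : J(c | a) = -1) (N : ℕ) :
    ∃ p > N, p.Prime ∧ J(b | p) = -1 ∧ J(c | p) = -1 := by
  have h4 : a.Coprime 4 := Nat.Coprime.pow_right 2 (Nat.coprime_two_right.mpr ha)
  have hcop : a.Coprime (4 * b.natAbs * c.natAbs) :=
    (h4.mul_right (coprime_natAbs_of_jacobiSym_eq_neg_one hab)).mul_right
      (coprime_natAbs_of_jacobiSym_eq_neg_one hac)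
  obtain ⟨p, hpN, hp, hpa⟩ := Nat.forall_exists_prime_gt_and_modEq N (by positivity) hcop
  have hpo : Odd p := by
    have : p % 2 = a % 2 := hpa.of_dvd ⟨2 * b.natAbs * c.natAbs, by ring⟩
    rw [Nat.odd_iff] at ha ⊢
    omega
  refine ⟨p, hpN, hp, ?_, ?_⟩
  · rw [jacobiSym_eq_of_modEq b (dvd_mul_right _ _) hpo ha hpa, hab]
  · rw [jacobiSym_eq_of_modEq c ⟨b.natAbs, by ring⟩ hpo ha hpa, hac]

theorem exists_odd_jacobiSym_eq_neg_one_and {b c : ℤ} (hb : b ≠ 0) (hc : c ≠ 0)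
    (hbn : ∃ n, Odd n ∧ J(b | n) = -1) (hcn : ∃ n, Odd n ∧ J(c | n) = -1) :
    ∃ a, Odd a ∧ J(b | a) = -1 ∧ J(c | a) = -1 := by
  obtain ⟨m, hm, hbm⟩ := hbn
  obtain ⟨n, hn, hcn⟩ := hcn
  -- replace the witnesses by odd primes `p ∤ c` and `q ∤ b`, so that `J(c | p), J(b | q) = ±1`
  obtain ⟨p, hpc, hp, hbp, -⟩ :=
    exists_prime_gt_jacobiSym_eq_neg_one hb hb hm hbm hbm (c.natAbs + 1)
  obtain ⟨q, hqb, hq, hcq, -⟩ :=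
    exists_prime_gt_jacobiSym_eq_neg_one hc hc hn hcn hcn (b.natAbs + 1)
  have hpo : Odd p := hp.odd_of_ne_two (by omega)
  have hqo : Odd q := hq.odd_of_ne_two (by omega)
  have hcp : c.gcd p = 1 := by
    simpa [Int.gcd_eq_natAbs] using
      (Nat.coprime_of_lt_prime (Int.natAbs_ne_zero.mpr hc) (by omega) hp).symm
  have hbq : b.gcd q = 1 := by
    simpa [Int.gcd_eq_natAbs] using
      (Nat.coprime_of_lt_prime (Int.natAbs_ne_zero.mpr hb) (by omega) hq).symm
  rcases jacobiSym.eq_one_or_neg_one hcp with hcp1 | hcp1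
  · rcases jacobiSym.eq_one_or_neg_one hbq with hbq1 | hbq1
    · have : NeZero p := ⟨hp.ne_zero⟩
      have : NeZero q := ⟨hq.ne_zero⟩
      refine ⟨p * q, hpo.mul hqo, ?_, ?_⟩
      · rw [jacobiSym.mul_right, hbp, hbq1, neg_one_mul]
      · rw [jacobiSym.mul_right, hcp1, hcq, one_mul]
    · exact ⟨q, hqo, hbq1, hcq⟩
  · exact ⟨p, hpo, hbp, hcp1⟩

theorem stmt_12_general (β γ : ℚ)
    (h1 : ¬ IsSquare β) (h2 : ¬ IsSquare γ) :
    {p : ℕ | ∃ hp : p.Prime,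
      haveI : Fact p.Prime := ⟨hp⟩
      ¬ IsSquare (β : ℚ_[p]) ∧ ¬ IsSquare (γ : ℚ_[p])}.Infinite := by
  obtain ⟨b, r, hb, hr, rfl⟩ :=
    Rat.exists_squarefree_mul_sq (β := β) (by rintro rfl; exact h1 .zero)
  obtain ⟨c, u, hc, hu, rfl⟩ :=
    Rat.exists_squarefree_mul_sq (β := γ) (by rintro rfl; exact h2 .zero)
  have hb1 : b ≠ 1 := by rintro rfl; exact h1 ((isSquare_mul_sq_iff hr).mpr ⟨1, by simp⟩)
  have hc1 : c ≠ 1 := by rintro rfl; exact h2 ((isSquare_mul_sq_iff hu).mpr ⟨1, by simp⟩)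
  obtain ⟨a, ha, hab, hac⟩ := exists_odd_jacobiSym_eq_neg_one_and hb.ne_zero hc.ne_zero
    (exists_odd_jacobiSym_eq_neg_one hb hb1) (exists_odd_jacobiSym_eq_neg_one hc hc1)
  refine Set.infinite_of_forall_exists_gt fun N => ?_
  obtain ⟨p, hpN, hp, hbp, hcp⟩ :=
    exists_prime_gt_jacobiSym_eq_neg_one hb.ne_zero hc.ne_zero ha hab hac N
  have : Fact p.Prime := ⟨hp⟩
  exact ⟨p, ⟨hp, Padic.not_isSquare_of_jacobiSym_eq_neg_one hbp hr,
    Padic.not_isSquare_of_jacobiSym_eq_neg_one hcp hu⟩, hpN⟩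

/-- If β, γ ∈ ℚ^× are such that none of β, γ, βγ is a square in ℚ (i.e. their
classes in ℚ^×/(ℚ^×)² are independent), then there are infinitely many primes p
such that neither β nor γ is a square in ℚ_p. -/
theorem stmt_12 (β γ : ℚ) (hβ : β ≠ 0) (hγ : γ ≠ 0)
    (h1 : ¬ IsSquare β) (h2 : ¬ IsSquare γ) (h3 : ¬ IsSquare (β * γ)) :
    {p : ℕ | ∃ hp : p.Prime,
      haveI : Fact p.Prime := ⟨hp⟩
      ¬ IsSquare (β : ℚ_[p]) ∧ ¬ IsSquare (γ : ℚ_[p])}.Infinite :=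
  stmt_12_general β γ h1 h2
end
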